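/- (Dilaton and string equations for p.) For every k ∈ ℕ, every n ≥ 1 and all m_1,…,m_n ∈ ℚ, the dilaton equation holds: p_k(m_1,…,m_n,1) − p_k(m_1,…,m_n,0) = p_{k−1}(m_1,…,m_n) (with p_{−1} of several variables := 0). Moreover, for every k ∈ ℕ and all nonnegative integers m_1,…,m_n, the string equation holds: (k+1)·p_{k+1}(m_1,…,m_n) = (m_1+⋯+m_n−k−1)·p_k(m_1,…,m_n) + Σ_{i=1}^n Σ_{j=1}^{m_i−1} 2j·p_k(m_1,…,m_{i−1},j,m_{i+1},…,m_n). -/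

import Mathlib

/-- Generalized binomial coefficient `binom(x,k) = x(x-1)⋯(x-k+1)/k!`. -/
def qbinom (x : ℚ) (k : ℕ) : ℚ := (∏ i ∈ Finset.range k, (x - i)) / (Nat.factorial k)

/-- `p_k(m) = binom(m-1,k)·binom(m+k,k)`. -/
def pPoly (k : ℕ) (m : ℚ) : ℚ := qbinom (m - 1) k * qbinom (m + k) k

/-- `q_k(m) = binom(m,k)·binom(m+k-1,k)`. -/
def qPoly (k : ℕ) (m : ℚ) : ℚ := qbinom m k * qbinom (m + k - 1) k

/-- Multivariate `p_k(m_1,…,m_n) = Σ_{k_1+⋯+k_n=k} p_{k_1}(m_1)·q_{k_2}(m_2)⋯q_{k_n}(m_n)`. -/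
def pMulti (k n : ℕ) (m : Fin n → ℚ) : ℚ :=
  ∑ f ∈ Finset.Nat.antidiagonalTuple n k,
    ∏ i : Fin n, (if i.val = 0 then pPoly (f i) (m i) else qPoly (f i) (m i))

/-!
Encode a family of one-variable polynomials `a_k(m)` by the generating series
`S(m) = ∑ₖ a_k(m) tᵏ`. Then `pMulti k n m` is the `tᵏ`-coefficient of `P(m₁) Q(m₂) ⋯ Q(mₙ)`.

Dilaton: `q_k(1) - q_k(0)` is `1` for `k = 1` and `0` otherwise, so `Q(1) - Q(0) = t`.

String: the operator `(1 + t) d/dt` takes `S` to `∑ₖ ((k+1) a_{k+1} + k a_k) tᵏ`, so the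
string equation for one variable says
`(1 + t) S'(m) = (m - c) S(m) + ∑_{0<j<m} 2j S(j)`, with `c = 1` for `p` and `c = 0` for `q`.
This telescopes in `m` to a polynomial identity in `x` between `a_k(x)`, `a_k(x+1)`,
`a_{k+1}(x)` and `a_{k+1}(x+1)`, which follows from the two recurrences of `qbinom` in `x` and
in `k`. Since `(1 + t) d/dt` is a derivation, the equation carries over to products, and the
constants `c` add up to `1`.
-/

open Finset PowerSeries

theorem PowerSeries.coeff_prod_eq_sum_antidiagonalTuple {R : Type*} [CommSemiring R] {n : ℕ}
    (f : Fin n → R⟦X⟧) (d : ℕ) :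
    coeff d (∏ i, f i) = ∑ g ∈ Nat.antidiagonalTuple n d, ∏ i, coeff (g i) (f i) := by
  rw [coeff_prod, ← piAntidiag_univ_fin_eq_antidiagonalTuple, finsuppAntidiag, sum_map,
    ← sum_attach (piAntidiag univ d)]
  rfl

theorem succ_mul_qbinom_succ (x : ℚ) (k : ℕ) :
    (k + 1) * qbinom x (k + 1) = qbinom x k * (x - k) := by
  rw [qbinom, qbinom, prod_range_succ, Nat.factorial_succ]
  push_cast
  field_simp

theorem sub_mul_qbinom_add_one (x : ℚ) (k : ℕ) :
    (x + 1 - k) * qbinom (x + 1) k = (x + 1) * qbinom x k := by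
  have h := (prod_range_succ (fun i : ℕ => x + 1 - i) k).symm.trans
    (prod_range_succ' (fun i : ℕ => x + 1 - i) k)
  simp only [Nat.cast_add, Nat.cast_one, add_sub_add_right_eq_sub, Nat.cast_zero, sub_zero] at h
  rw [qbinom, qbinom, ← mul_div_assoc, ← mul_div_assoc, mul_comm, h, mul_comm]

theorem sq_mul_qPoly_succ (k : ℕ) (x : ℚ) :
    ((k : ℚ) + 1) ^ 2 * qPoly (k + 1) x = (x ^ 2 - k ^ 2) * qPoly k x := by
  have hc := sub_mul_qbinom_add_one (x + k - 1) k
  rw [sub_add_cancel] at hc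
  rw [qPoly, qPoly, Nat.cast_succ, ← add_assoc, add_sub_cancel_right]
  linear_combination (k + 1) * qbinom (x + k) (k + 1) * succ_mul_qbinom_succ x k
    + qbinom x k * (x - k) * succ_mul_qbinom_succ (x + k) k + qbinom x k * (x - k) * hc

theorem sq_mul_pPoly_succ (k : ℕ) (x : ℚ) :
    ((k : ℚ) + 1) ^ 2 * pPoly (k + 1) x = (x ^ 2 - (k + 1) ^ 2) * pPoly k x := by
  have hc := sub_mul_qbinom_add_one (x + k) k
  rw [pPoly, pPoly, Nat.cast_succ, ← add_assoc]
  linear_combination (k + 1) * qbinom (x + k + 1) (k + 1) * succ_mul_qbinom_succ (x - 1) k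
    + qbinom (x - 1) k * (x - 1 - k) * succ_mul_qbinom_succ (x + k + 1) k
    + qbinom (x - 1) k * (x - 1 - k) * hc

theorem mul_qPoly_add_one (k : ℕ) (x : ℚ) :
    x * (x + 1 - k) * qPoly k (x + 1) = (x + 1) * (x + k) * qPoly k x := by
  have hc := sub_mul_qbinom_add_one (x + k - 1) k
  rw [sub_add_cancel] at hc
  rw [qPoly, qPoly, add_right_comm, add_sub_cancel_right]
  linear_combination x * qbinom (x + k) k * sub_mul_qbinom_add_one x k
    + (x + 1) * qbinom x k * hc

theorem mul_pPoly_add_one (k : ℕ) (x : ℚ) :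
    (x + 1) * (x - k) * pPoly k (x + 1) = x * (x + k + 1) * pPoly k x := by
  have ha := sub_mul_qbinom_add_one (x - 1) k
  rw [sub_add_cancel] at ha
  rw [pPoly, pPoly, add_sub_cancel_right, add_right_comm]
  linear_combination (x + 1) * qbinom (x + k + 1) k * ha
    + x * qbinom (x - 1) k * sub_mul_qbinom_add_one (x + k) k

theorem qbinom_natCast_of_lt {j k : ℕ} (h : j < k) : qbinom j k = 0 := by
  rw [qbinom, prod_eq_zero (mem_range.2 h) (sub_self _), zero_div]

theorem qPoly_natCast_of_lt {j k : ℕ} (h : j < k) : qPoly k j = 0 := by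
  rw [qPoly, qbinom_natCast_of_lt h, zero_mul]

theorem sum_Ico_one_two_mul_eq_sub {R : Type*} [CommRing R] {L f : R → R}
    (h : ∀ x, L (x + 1) - L x = 2 * x * f x) (m : ℕ) :
    ∑ j ∈ Ico 1 m, 2 * (j : R) * f j = L m - L 0 := by
  induction m with
  | zero => simp
  | succ m ih =>
    rcases Nat.eq_zero_or_pos m with rfl | hm
    · simpa using (h 0).symm
    · rw [sum_Ico_succ_top hm, ih, Nat.cast_succ, ← h m]
      ring

theorem qPoly_string (k m : ℕ) :
    (k + 1) * qPoly (k + 1) m + k * qPoly k m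
      = m * qPoly k m + ∑ j ∈ Ico 1 m, 2 * (j : ℚ) * qPoly k j := by
  let L : ℚ → ℚ := fun x => (k + 1) * qPoly (k + 1) x + (k - x) * qPoly k x
  have step : ∀ x, L (x + 1) - L x = 2 * x * qPoly k x := fun x =>
    mul_left_cancel₀ (Nat.cast_add_one_ne_zero k) <| by
      linear_combination sq_mul_qPoly_succ k (x + 1) - sq_mul_qPoly_succ k x + mul_qPoly_add_one k x
  have base : L 0 = 0 := by
    have hq0 : ∀ i, 0 < i → qPoly i 0 = 0 := fun i hi => by exact_mod_cast qPoly_natCast_of_lt hi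
    rcases Nat.eq_zero_or_pos k with rfl | hk
    · simp [L, hq0 1 one_pos]
    · simp [L, hq0 k hk, hq0 (k + 1) k.succ_pos]
  linear_combination base - sum_Ico_one_two_mul_eq_sub step m

theorem pPoly_string (k m : ℕ) :
    (k + 1) * pPoly (k + 1) m + k * pPoly k m
      = (m - 1) * pPoly k m + ∑ j ∈ Ico 1 m, 2 * (j : ℚ) * pPoly k j := by
  let L : ℚ → ℚ := fun x => (k + 1) * pPoly (k + 1) x + (k + 1 - x) * pPoly k x
  have step : ∀ x, L (x + 1) - L x = 2 * x * pPoly k x := fun x =>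
    mul_left_cancel₀ (Nat.cast_add_one_ne_zero k) <| by
      linear_combination sq_mul_pPoly_succ k (x + 1) - sq_mul_pPoly_succ k x + mul_pPoly_add_one k x
  have base : L 0 = 0 :=
    mul_left_cancel₀ (Nat.cast_add_one_ne_zero k) <| by
      linear_combination sq_mul_pPoly_succ k 0
  linear_combination base - sum_Ico_one_two_mul_eq_sub step m

theorem Derivation.leibniz_prod {R A M : Type*} [CommSemiring R] [CommSemiring A]
    [AddCommMonoid M] [Algebra R A] [Module A M] [Module R M] [IsScalarTower R A M]
    (D : Derivation R A M) {ι : Type*} [DecidableEq ι] (s : Finset ι) (f : ι → A) :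
    D (∏ i ∈ s, f i) = ∑ i ∈ s, (∏ j ∈ s.erase i, f j) • D (f i) := by
  induction s using Finset.induction_on with
  | empty => simp
  | insert a s ha ih =>
    have herase : ∀ i ∈ s, (insert a s).erase i = insert a (s.erase i) := fun i hi =>
      erase_insert_of_ne (ne_of_mem_of_not_mem hi ha).symm
    rw [prod_insert ha, D.leibniz, ih, sum_insert ha, erase_insert ha, smul_sum, add_comm]
    congr 1
    refine sum_congr rfl fun i hi => ?_
    rw [herase i hi, prod_insert fun h => ha (mem_of_mem_erase h), mul_smul]

theorem PowerSeries.coeff_one_add_X_mul_derivative {R : Type*} [CommSemiring R] (f : R⟦X⟧)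
    (k : ℕ) : coeff k ((1 + X) * d⁄dX R f) = (k + 1) * coeff (k + 1) f + k * coeff k f := by
  rw [add_mul, one_mul, map_add, coeff_derivative]
  rcases k with _ | k
  · simp
  · rw [coeff_succ_X_mul, coeff_derivative]
    push_cast
    ring

def HasStringEq (S : ℚ → ℚ⟦X⟧) (c : ℚ) : Prop :=
  ∀ m : ℕ, (1 + X) * d⁄dX ℚ (S m) = ((m : ℚ) - c) • S m + ∑ j ∈ Ico 1 m, (2 * j : ℚ) • S j

theorem hasStringEq_mk {a : ℕ → ℚ → ℚ} {c : ℚ}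
    (h : ∀ k m : ℕ, (k + 1) * a (k + 1) m + k * a k m
      = (m - c) * a k m + ∑ j ∈ Ico 1 m, 2 * (j : ℚ) * a k j) :
    HasStringEq (fun x => mk fun k => a k x) c := by
  intro m
  ext k
  simp [coeff_one_add_X_mul_derivative, map_sum, h]

def qSeries (x : ℚ) : ℚ⟦X⟧ := mk fun k => qPoly k x

def pSeries (x : ℚ) : ℚ⟦X⟧ := mk fun k => pPoly k x

theorem hasStringEq_qSeries : HasStringEq qSeries 0 :=
  hasStringEq_mk fun k m => by simpa using qPoly_string k m

theorem hasStringEq_pSeries : HasStringEq pSeries 1 :=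
  hasStringEq_mk pPoly_string

theorem HasStringEq.prod {ι : Type*} [Fintype ι] [DecidableEq ι] {S : ι → ℚ → ℚ⟦X⟧}
    {c : ι → ℚ} (hS : ∀ i, HasStringEq (S i) (c i)) (m : ι → ℕ) :
    (1 + X) * d⁄dX ℚ (∏ i, S i (m i)) = (∑ i, ((m i : ℚ) - c i)) • ∏ i, S i (m i)
      + ∑ i, ∑ j ∈ Ico 1 (m i),
          (2 * j : ℚ) • ∏ l, S l (Function.update (fun l => (m l : ℚ)) i j l) := by
  have hupdate : ∀ i (x : ℚ), ∏ l, S l (Function.update (fun l => (m l : ℚ)) i x l)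
      = S i x * ∏ l ∈ univ.erase i, S l (m l) := by
    intro i x
    rw [← mul_prod_erase univ _ (mem_univ i), Function.update_self]
    congr 1
    exact prod_congr rfl fun l hl => by rw [Function.update_of_ne (ne_of_mem_erase hl)]
  rw [Derivation.leibniz_prod, mul_sum, sum_smul, ← sum_add_distrib]
  refine sum_congr rfl fun i _ => ?_
  rw [smul_eq_mul, mul_left_comm, hS i (m i), ← mul_prod_erase univ _ (mem_univ i)]
  simp only [hupdate, mul_add, mul_sum, smul_mul_assoc, mul_comm]

def pMultiFactor {n : ℕ} (i : Fin n) : ℚ → ℚ⟦X⟧ := if i.val = 0 then pSeries else qSeries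

theorem pMulti_eq_coeff_prod (k n : ℕ) (m : Fin n → ℚ) :
    pMulti k n m = coeff k (∏ i, pMultiFactor i (m i)) := by
  rw [coeff_prod_eq_sum_antidiagonalTuple, pMulti]
  refine sum_congr rfl fun g _ => prod_congr rfl fun i _ => ?_
  unfold pMultiFactor
  split_ifs <;> simp [pSeries, qSeries]

theorem hasStringEq_pMultiFactor {n : ℕ} (i : Fin n) :
    HasStringEq (pMultiFactor i) (if i.val = 0 then 1 else 0) := by
  unfold pMultiFactor
  split_ifs
  exacts [hasStringEq_pSeries, hasStringEq_qSeries]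

theorem prod_pMultiFactor_snoc {n : ℕ} (hn : n ≠ 0) (m : Fin n → ℚ) (x : ℚ) :
    ∏ i, pMultiFactor i ((Fin.snoc m x : Fin (n + 1) → ℚ) i)
      = (∏ i, pMultiFactor i (m i)) * qSeries x := by
  rw [Fin.prod_univ_castSucc]
  simp only [pMultiFactor, Fin.snoc_castSucc, Fin.snoc_last, Fin.val_castSucc, Fin.val_last, hn,
    if_false]

theorem qSeries_one_sub_qSeries_zero : qSeries 1 - qSeries 0 = X := by
  ext k
  rcases k with _ | _ | k
  · simp [qSeries, qPoly, qbinom]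
  · simp [qSeries, qPoly, qbinom]
  · have h0 : qPoly (k + 2) 0 = 0 := by exact_mod_cast qPoly_natCast_of_lt (j := 0) (by omega)
    have h1 : qPoly (k + 2) 1 = 0 := by exact_mod_cast qPoly_natCast_of_lt (j := 1) (by omega)
    simp [qSeries, coeff_X, h0, h1]

/-- Dilaton equation `p_k(m_1,…,m_n,1) - p_k(m_1,…,m_n,0) = p_{k-1}(m_1,…,m_n)`
(with `p_{-1} := 0`) and string equation for the multivariate polynomials `p_k`,
the latter at nonnegative integer values of the variables. -/
theorem stmt3 (k n : ℕ) (hn : 1 ≤ n) :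
    (∀ m : Fin n → ℚ,
      pMulti k (n + 1) (Fin.snoc m 1) - pMulti k (n + 1) (Fin.snoc m 0) =
        (if k = 0 then 0 else pMulti (k - 1) n m)) ∧
    (∀ m : Fin n → ℕ,
      (k + 1 : ℚ) * pMulti (k + 1) n (fun i => (m i : ℚ)) =
        ((∑ i, (m i : ℚ)) - k - 1) * pMulti k n (fun i => (m i : ℚ)) +
          ∑ i : Fin n, ∑ j ∈ Finset.Ico 1 (m i),
            (2 * j : ℚ) * pMulti k n (Function.update (fun i => (m i : ℚ)) i (j : ℚ))) := by
  refine ⟨fun m => ?_, fun m => ?_⟩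
  · rw [pMulti_eq_coeff_prod, pMulti_eq_coeff_prod, prod_pMultiFactor_snoc (by omega),
      prod_pMultiFactor_snoc (by omega), ← map_sub, ← mul_sub, qSeries_one_sub_qSeries_zero]
    rcases k with _ | k
    · simp
    · simp [coeff_succ_mul_X, pMulti_eq_coeff_prod]
  · have hdefect : ∑ i : Fin n, (if i.val = 0 then (1 : ℚ) else 0) = 1 := by
      simp_rw [← Fin.ext_iff (b := ⟨0, hn⟩), sum_ite_eq', mem_univ, if_true]
    have h := congrArg (coeff k) (HasStringEq.prod hasStringEq_pMultiFactor m)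
    simp only [coeff_one_add_X_mul_derivative, map_add, map_sum, coeff_smul, sum_sub_distrib,
      hdefect, smul_eq_mul, ← pMulti_eq_coeff_prod] at h
    linear_combination h
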